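/- arXiv:2301.02095 — 3 statements merged into one kernel-verified Lean document; each statement's English description precedes it below -/
import Mathlib

section
/- Let V : ℝ^d → ℝ be C², let c > 0, and let u : ℝ → ℝ^d be a non-constant global solution of ü = -c u̇ + ∇V(u) such that u(ξ) → e₋ as ξ → -∞ and u(ξ) → e₊ as ξ → +∞, where e₋ and e₊ are critical points of V, and such that u̇(ξ) → 0 as ξ → ±∞. Then e₋ ≠ e₊ and V(e₋) < V(e₊). -/
/-!
Along a solution of `ü = -c u̇ + ∇V(u)` the energy `½‖u̇‖² - V(u)` has derivative `-c‖u̇‖² ≤ 0`,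
so it is nonincreasing, and it is not constant since otherwise `u̇ ≡ 0`. Its limits at `∓∞`
are `-V(e∓)`, hence `-V(e₊) < -V(e₋)`.
-/

open Filter Topology

theorem Antitone.lt_of_tendsto_atBot_of_tendsto_atTop {α β : Type*} [Preorder α]
    [IsDirectedOrder α] [IsCodirectedOrder α] [LinearOrder β] [TopologicalSpace β]
    [OrderClosedTopology β] {f : α → β} {a b : β}
    (hf : Antitone f) (hbot : Tendsto f atBot (𝓝 a)) (htop : Tendsto f atTop (𝓝 b))
    (hne : ∃ x y, f x ≠ f y) : b < a := by
  obtain ⟨x, y, hxy⟩ := hne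
  wlog hlt : f y < f x generalizing x y
  · exact this y x hxy.symm ((Ne.symm hxy).lt_or_gt.resolve_left hlt)
  calc b ≤ f y := hf.le_of_tendsto htop y
    _ < f x := hlt
    _ ≤ a := hf.ge_of_tendsto hbot x

variable {F : Type*} [NormedAddCommGroup F]

noncomputable def mechanicalEnergy (V : F → ℝ) (u du : ℝ → F) (ξ : ℝ) : ℝ :=
  ‖du ξ‖ ^ 2 / 2 - V (u ξ)

theorem tendsto_mechanicalEnergy {V : F → ℝ} {u du : ℝ → F} {l : Filter ℝ} {e : F}
    (hV : ContinuousAt V e) (hu : Tendsto u l (𝓝 e)) (hdu : Tendsto du l (𝓝 0)) :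
    Tendsto (mechanicalEnergy V u du) l (𝓝 (-V e)) := by
  unfold mechanicalEnergy
  simpa using ((hdu.norm.pow 2).div_const 2).sub (hV.tendsto.comp hu)

section DampedGradientSystem

variable [InnerProductSpace ℝ F] [CompleteSpace F] {V : F → ℝ} {c : ℝ} {u du : ℝ → F}

theorem hasDerivAt_mechanicalEnergy (hV : Differentiable ℝ V)
    (hu : ∀ ξ, HasDerivAt u (du ξ) ξ)
    (hdu : ∀ ξ, HasDerivAt du (-c • du ξ + gradient V (u ξ)) ξ) (ξ : ℝ) :
    HasDerivAt (mechanicalEnergy V u du) (-c * ‖du ξ‖ ^ 2) ξ := by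
  have hVu : HasDerivAt (fun t => V (u t)) (inner ℝ (gradient V (u ξ)) (du ξ)) ξ :=
    (hV (u ξ)).hasGradientAt.hasFDerivAt.comp_hasDerivAt ξ (hu ξ)
  refine (((hdu ξ).norm_sq.div_const 2).sub hVu).congr_deriv ?_
  simp only [inner_add_right, inner_smul_right, real_inner_self_eq_norm_sq,
    real_inner_comm (du ξ)]
  ring

theorem antitone_mechanicalEnergy (hc : 0 ≤ c) (hV : Differentiable ℝ V)
    (hu : ∀ ξ, HasDerivAt u (du ξ) ξ)
    (hdu : ∀ ξ, HasDerivAt du (-c • du ξ + gradient V (u ξ)) ξ) :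
    Antitone (mechanicalEnergy V u du) :=
  antitone_of_hasDerivAt_nonpos (f' := fun ξ => -c * ‖du ξ‖ ^ 2)
    (hasDerivAt_mechanicalEnergy hV hu hdu) fun ξ => by
      show -c * ‖du ξ‖ ^ 2 ≤ 0
      exact mul_nonpos_of_nonpos_of_nonneg (neg_nonpos.mpr hc) (sq_nonneg _)

theorem exists_mechanicalEnergy_ne (hc : c ≠ 0) (hV : Differentiable ℝ V)
    (hu : ∀ ξ, HasDerivAt u (du ξ) ξ)
    (hdu : ∀ ξ, HasDerivAt du (-c • du ξ + gradient V (u ξ)) ξ)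
    (hnc : ∃ ξ₁ ξ₂, u ξ₁ ≠ u ξ₂) :
    ∃ ξ₁ ξ₂, mechanicalEnergy V u du ξ₁ ≠ mechanicalEnergy V u du ξ₂ := by
  by_contra! hconst
  have hdu_zero : ∀ ξ, du ξ = 0 := fun ξ => by
    have hE : HasDerivAt (mechanicalEnergy V u du) 0 ξ :=
      (hasDerivAt_const ξ (mechanicalEnergy V u du 0)).congr_of_eventuallyEq
        (Eventually.of_forall fun η => hconst η 0)
    have := (hasDerivAt_mechanicalEnergy hV hu hdu ξ).unique hE
    simpa [hc] using this
  obtain ⟨ξ₁, ξ₂, hne⟩ := hnc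
  exact hne (is_const_of_deriv_eq_zero (fun ξ => (hu ξ).differentiableAt)
    (fun ξ => by rw [(hu ξ).deriv, hdu_zero]) ξ₁ ξ₂)

end DampedGradientSystem

theorem travelling_front_invades_higher_critical_point_general {d : ℕ}
    (V : EuclideanSpace ℝ (Fin d) → ℝ) (hV : ContDiff ℝ 2 V)
    (c : ℝ) (hc : 0 < c) (u du : ℝ → EuclideanSpace ℝ (Fin d))
    (hu : ∀ ξ, HasDerivAt u (du ξ) ξ)
    (hdu : ∀ ξ, HasDerivAt du (-c • du ξ + gradient V (u ξ)) ξ)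
    (eminus eplus : EuclideanSpace ℝ (Fin d))
    (hnc : ∃ ξ₁ ξ₂ : ℝ, u ξ₁ ≠ u ξ₂)
    (huBot : Tendsto u atBot (nhds eminus)) (hduBot : Tendsto du atBot (nhds 0))
    (huTop : Tendsto u atTop (nhds eplus)) (hduTop : Tendsto du atTop (nhds 0)) :
    eminus ≠ eplus ∧ V eminus < V eplus := by
  have hVdiff : Differentiable ℝ V := hV.differentiable (by norm_num)
  have hlt : -V eplus < -V eminus :=
    (antitone_mechanicalEnergy hc.le hVdiff hu hdu).lt_of_tendsto_atBot_of_tendsto_atTop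
      (tendsto_mechanicalEnergy hVdiff.continuous.continuousAt huBot hduBot)
      (tendsto_mechanicalEnergy hVdiff.continuous.continuousAt huTop hduTop)
      (exists_mechanicalEnergy_ne hc.ne' hVdiff hu hdu hnc)
  have hV_lt : V eminus < V eplus := neg_lt_neg_iff.mp hlt
  exact ⟨fun h => hV_lt.ne (congrArg V h), hV_lt⟩

theorem travelling_front_invades_higher_critical_point {d : ℕ}
    (V : EuclideanSpace ℝ (Fin d) → ℝ) (hV : ContDiff ℝ 2 V)
    (c : ℝ) (hc : 0 < c) (u du : ℝ → EuclideanSpace ℝ (Fin d))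
    (hu : ∀ ξ, HasDerivAt u (du ξ) ξ)
    (hdu : ∀ ξ, HasDerivAt du (-c • du ξ + gradient V (u ξ)) ξ)
    (eminus eplus : EuclideanSpace ℝ (Fin d))
    (heMinus : gradient V eminus = 0) (hePlus : gradient V eplus = 0)
    (hnc : ∃ ξ₁ ξ₂ : ℝ, u ξ₁ ≠ u ξ₂)
    (huBot : Tendsto u atBot (nhds eminus)) (hduBot : Tendsto du atBot (nhds 0))
    (huTop : Tendsto u atTop (nhds eplus)) (hduTop : Tendsto du atTop (nhds 0)) :
    eminus ≠ eplus ∧ V eminus < V eplus :=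
  travelling_front_invades_higher_critical_point_general V hV c hc u du hu hdu eminus eplus hnc
    huBot hduBot huTop hduTop
end

section
/- Let V : ℝ^d → ℝ be C², let c ∈ ℝ, and let u : ℝ → ℝ^d be a global solution of ü = -c u̇ + ∇V(u) converging to critical points e₋ and e₊ of V at -∞ and +∞ respectively. If c ≠ 0, then u̇(ξ) → 0 as ξ → ±∞. -/
/-!
The Hamiltonian `H = ‖u̇‖² / 2 - V(u)` satisfies `H' = -c ‖u̇‖²`, so `E = -H / c` is monotone with
`E' = ‖u̇‖²`, while `‖u̇‖² + 2 c E = 2 V(u)` converges at each end. If `E` converges, then so does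
`‖u̇‖²`, and its limit, being the limit of `E'`, must vanish. Otherwise `‖u̇‖ → ∞`; then
`p = ⟪u - e, u̇⟫` has `p' = ‖u̇‖² + ⟪u - e, ü⟫ ≥ 1` eventually, because `ü = -c u̇ + ∇V(u)` grows at
most linearly in `‖u̇‖` while `u - e` is small, so `‖u - e‖²`, whose derivative is `2 p`, is
unbounded, contradicting `u → e`. The end at `-∞` follows by reversing time, which turns `c` into
`-c`.
-/

open Filter Set Topology
open scoped RealInnerProductSpace

theorem tendsto_atTop_of_eventually_le_deriv {f f' : ℝ → ℝ} (hf : ∀ x, HasDerivAt f (f' x) x)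
    {ε : ℝ} (hε : 0 < ε) (h : ∀ᶠ x in atTop, ε ≤ f' x) : Tendsto f atTop atTop := by
  obtain ⟨T, hT⟩ := eventually_atTop.1 h
  have hdiff : Differentiable ℝ f := fun x => (hf x).differentiableAt
  have hderiv : ∀ y ∈ interior (Ici T), ε ≤ deriv f y := fun y hy => by
    rw [interior_Ici] at hy
    rw [(hf y).deriv]
    exact hT y hy.le
  have hgrowth : ∀ x ≥ T, f T + ε * (x - T) ≤ f x := fun x hx => by
    linarith [(convex_Ici T).mul_sub_le_image_sub_of_le_deriv hdiff.continuous.continuousOn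
      hdiff.differentiableOn hderiv T self_mem_Ici x hx hx]
  refine tendsto_atTop_mono' atTop (eventually_atTop.2 ⟨T, hgrowth⟩) ?_
  exact tendsto_atTop_add_const_left _ _
    ((tendsto_atTop_add_const_right _ _ tendsto_id).const_mul_atTop hε)

theorem tendsto_zero_or_atTop_of_hasDerivAt_of_tendsto_add {m E : ℝ → ℝ} {k β : ℝ} (hk : k ≠ 0)
    (hm : ∀ x, 0 ≤ m x) (hE : ∀ x, HasDerivAt E (m x) x)
    (hmE : Tendsto (fun x => m x + k * E x) atTop (𝓝 β)) :
    Tendsto m atTop (𝓝 0) ∨ Tendsto m atTop atTop := by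
  have hmono : Monotone E := monotone_of_hasDerivAt_nonneg hE hm
  have hm_eq : m = fun x => (m x + k * E x) + -k * E x := by ext; ring
  by_cases hbdd : BddAbove (range E)
  · left
    have hEL : Tendsto E atTop (𝓝 (⨆ x, E x)) := tendsto_atTop_ciSup hmono hbdd
    have hml : Tendsto m atTop (𝓝 (β + -k * ⨆ x, E x)) := hm_eq ▸ hmE.add (hEL.const_mul (-k))
    set l := β + -k * ⨆ x, E x
    have hl : l = 0 := by
      refine le_antisymm ?_ (ge_of_tendsto' hml hm)
      by_contra! hl
      have hEtop := tendsto_atTop_of_eventually_le_deriv hE (half_pos hl)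
        (hml.eventually (eventually_ge_nhds (half_lt_self hl)))
      exact not_tendsto_nhds_of_tendsto_atTop hEtop _ hEL
    rwa [hl] at hml
  · right
    have hEtop : Tendsto E atTop atTop := tendsto_atTop_atTop_of_monotone' hmono hbdd
    rcases hk.lt_or_gt with hk | hk
    · exact hm_eq ▸ hmE.add_atTop (hEtop.const_mul_atTop (neg_pos.2 hk))
    · have hmbot : Tendsto m atTop atBot :=
        hm_eq ▸ hmE.add_atBot (hEtop.const_mul_atTop_of_neg (neg_neg_iff_pos.2 hk))
      obtain ⟨x, hx⟩ := (hmbot.eventually (eventually_lt_atBot 0)).exists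
      exact absurd (hm x) hx.not_ge

variable {F : Type*} [NormedAddCommGroup F] [InnerProductSpace ℝ F]

theorem not_tendsto_norm_atTop_of_hasDerivAt {c : ℝ} {u du g : ℝ → F} {e : F}
    (hu : ∀ ξ, HasDerivAt u (du ξ) ξ) (hdu : ∀ ξ, HasDerivAt du (-c • du ξ + g ξ) ξ)
    (hg : IsBoundedUnder (· ≤ ·) atTop (fun ξ => ‖g ξ‖)) (he : Tendsto u atTop (𝓝 e)) :
    ¬Tendsto (fun ξ => ‖du ξ‖) atTop atTop := by
  intro hblow
  obtain ⟨G, hG⟩ := hg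
  have hp : ∀ ξ, HasDerivAt (fun ξ => ⟪u ξ - e, du ξ⟫)
      (⟪u ξ - e, -c • du ξ + g ξ⟫ + ‖du ξ‖ ^ 2) ξ := fun ξ =>
    (((hu ξ).sub_const e).inner ℝ (hdu ξ)).congr_deriv
      (by rw [real_inner_self_eq_norm_sq, add_comm])
  have hp' : ∀ᶠ ξ in atTop, 1 ≤ ⟪u ξ - e, -c • du ξ + g ξ⟫ + ‖du ξ‖ ^ 2 := by
    filter_upwards [eventually_map.1 hG, he.eventually (Metric.closedBall_mem_nhds e one_pos),
      hblow.eventually_ge_atTop (|c| + G + 1)] with ξ hgξ huξ hduξ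
    rw [dist_eq_norm] at huξ
    have hinner : |⟪u ξ - e, -c • du ξ + g ξ⟫| ≤ |c| * ‖du ξ‖ + G :=
      calc |⟪u ξ - e, -c • du ξ + g ξ⟫| ≤ ‖u ξ - e‖ * ‖-c • du ξ + g ξ‖ :=
            abs_real_inner_le_norm _ _
        _ ≤ 1 * (|c| * ‖du ξ‖ + G) := by
          gcongr
          calc ‖-c • du ξ + g ξ‖ ≤ ‖-c • du ξ‖ + ‖g ξ‖ := norm_add_le _ _
            _ ≤ |c| * ‖du ξ‖ + G := by rw [norm_smul, norm_neg, Real.norm_eq_abs]; linarith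
        _ = |c| * ‖du ξ‖ + G := one_mul _
    nlinarith [neg_abs_le ⟪u ξ - e, -c • du ξ + g ξ⟫, norm_nonneg (g ξ), abs_nonneg c]
  have hq : ∀ ξ, HasDerivAt (fun ξ => ‖u ξ - e‖ ^ 2) (2 * ⟪u ξ - e, du ξ⟫) ξ := fun ξ =>
    ((hu ξ).sub_const e).norm_sq
  have hq_top : Tendsto (fun ξ => ‖u ξ - e‖ ^ 2) atTop atTop := by
    refine tendsto_atTop_of_eventually_le_deriv hq two_pos ?_
    filter_upwards [(tendsto_atTop_of_eventually_le_deriv hp one_pos hp').eventually_ge_atTop 1]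
      with ξ hξ
    linarith
  have hq_zero : Tendsto (fun ξ => ‖u ξ - e‖ ^ 2) atTop (𝓝 0) := by
    simpa using ((he.sub_const e).norm).pow 2
  exact not_tendsto_nhds_of_tendsto_atTop hq_top _ hq_zero

variable [CompleteSpace F]

theorem ContDiff.continuous_gradient {V : F → ℝ} (hV : ContDiff ℝ 1 V) : Continuous (gradient V) :=
  (InnerProductSpace.toDual ℝ F).symm.continuous.comp (hV.continuous_fderiv one_ne_zero)

theorem hasDerivAt_hamiltonian {V : F → ℝ} (hV : Differentiable ℝ V) {c : ℝ} {u du : ℝ → F}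
    (hu : ∀ ξ, HasDerivAt u (du ξ) ξ)
    (hdu : ∀ ξ, HasDerivAt du (-c • du ξ + gradient V (u ξ)) ξ) (ξ : ℝ) :
    HasDerivAt (fun ξ => ‖du ξ‖ ^ 2 / 2 - V (u ξ)) (-c * ‖du ξ‖ ^ 2) ξ := by
  have hVu : HasDerivAt (fun t => V (u t)) ⟪gradient V (u ξ), du ξ⟫ ξ := by
    simpa [Function.comp_def, InnerProductSpace.toDual_apply_apply] using
      (hV (u ξ)).hasGradientAt.hasFDerivAt.comp_hasDerivAt ξ (hu ξ)
  refine (((hdu ξ).norm_sq.div_const 2).sub hVu).congr_deriv ?_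
  rw [inner_add_right, real_inner_smul_right, real_inner_self_eq_norm_sq,
    real_inner_comm (du ξ)]
  ring

theorem tendsto_atTop_zero_of_hasDerivAt {V : F → ℝ} (hV : ContDiff ℝ 1 V) {c : ℝ} (hc : c ≠ 0)
    {u du : ℝ → F} (hu : ∀ ξ, HasDerivAt u (du ξ) ξ)
    (hdu : ∀ ξ, HasDerivAt du (-c • du ξ + gradient V (u ξ)) ξ) {e : F}
    (he : Tendsto u atTop (𝓝 e)) : Tendsto du atTop (𝓝 0) := by
  have hH := hasDerivAt_hamiltonian (hV.differentiable one_ne_zero) hu hdu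
  have hE : ∀ ξ, HasDerivAt (fun ξ => -(‖du ξ‖ ^ 2 / 2 - V (u ξ)) / c) (‖du ξ‖ ^ 2) ξ :=
    fun ξ => ((hH ξ).neg.div_const c).congr_deriv (by field_simp)
  have hmE : Tendsto (fun ξ => ‖du ξ‖ ^ 2 + 2 * c * (-(‖du ξ‖ ^ 2 / 2 - V (u ξ)) / c)) atTop
      (𝓝 (2 * V e)) :=
    (((hV.continuous.tendsto e).comp he).const_mul 2).congr fun ξ => by
      simp only [Function.comp_apply]; field_simp; ring
  rcases tendsto_zero_or_atTop_of_hasDerivAt_of_tendsto_add (mul_ne_zero two_ne_zero hc)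
    (fun ξ => by positivity) hE hmE with h0 | hinf
  · exact tendsto_zero_iff_norm_tendsto_zero.2 (by simpa using h0.sqrt)
  · have hg : Tendsto (fun ξ => gradient V (u ξ)) atTop (𝓝 (gradient V e)) :=
      (hV.continuous_gradient.tendsto e).comp he
    refine absurd ?_ (not_tendsto_norm_atTop_of_hasDerivAt hu hdu hg.norm.isBoundedUnder_le he)
    simpa only [Function.comp_def, Real.sqrt_sq (norm_nonneg _)] using
      Real.tendsto_sqrt_atTop.comp hinf

theorem tendsto_atBot_zero_of_hasDerivAt {V : F → ℝ} (hV : ContDiff ℝ 1 V) {c : ℝ} (hc : c ≠ 0)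
    {u du : ℝ → F} (hu : ∀ ξ, HasDerivAt u (du ξ) ξ)
    (hdu : ∀ ξ, HasDerivAt du (-c • du ξ + gradient V (u ξ)) ξ) {e : F}
    (he : Tendsto u atBot (𝓝 e)) : Tendsto du atBot (𝓝 0) := by
  have hv : ∀ ξ, HasDerivAt (fun t => u (-t)) (-du (-ξ)) ξ := fun ξ => by
    simpa [Function.comp_def] using (hu (-ξ)).scomp ξ (hasDerivAt_neg ξ)
  have hdv : ∀ ξ, HasDerivAt (fun t => -du (-t)) (-(-c) • -du (-ξ) + gradient V (u (-ξ))) ξ :=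
    fun ξ => ((hdu (-ξ)).scomp ξ (hasDerivAt_neg ξ)).neg.congr_deriv (by module)
  have := tendsto_atTop_zero_of_hasDerivAt hV (neg_ne_zero.2 hc) hv hdv
    (he.comp tendsto_neg_atTop_atBot)
  simpa [Function.comp_def] using (this.comp tendsto_neg_atBot_atTop).neg

theorem derivative_tends_to_zero_at_both_ends_general {d : ℕ}
    (V : EuclideanSpace ℝ (Fin d) → ℝ) (hV : ContDiff ℝ 2 V)
    (c : ℝ) (hc : c ≠ 0) (u du : ℝ → EuclideanSpace ℝ (Fin d))
    (hu : ∀ ξ, HasDerivAt u (du ξ) ξ)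
    (hdu : ∀ ξ, HasDerivAt du (-c • du ξ + gradient V (u ξ)) ξ)
    (eminus eplus : EuclideanSpace ℝ (Fin d))
    (huBot : Tendsto u atBot (nhds eminus)) (huTop : Tendsto u atTop (nhds eplus)) :
    Tendsto du atBot (nhds 0) ∧ Tendsto du atTop (nhds 0) :=
  ⟨tendsto_atBot_zero_of_hasDerivAt (hV.of_le (by norm_num)) hc hu hdu huBot,
    tendsto_atTop_zero_of_hasDerivAt (hV.of_le (by norm_num)) hc hu hdu huTop⟩

theorem derivative_tends_to_zero_at_both_ends {d : ℕ}
    (V : EuclideanSpace ℝ (Fin d) → ℝ) (hV : ContDiff ℝ 2 V)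
    (c : ℝ) (hc : c ≠ 0) (u du : ℝ → EuclideanSpace ℝ (Fin d))
    (hu : ∀ ξ, HasDerivAt u (du ξ) ξ)
    (hdu : ∀ ξ, HasDerivAt du (-c • du ξ + gradient V (u ξ)) ξ)
    (eminus eplus : EuclideanSpace ℝ (Fin d))
    (heMinus : gradient V eminus = 0) (hePlus : gradient V eplus = 0)
    (huBot : Tendsto u atBot (nhds eminus)) (huTop : Tendsto u atTop (nhds eplus)) :
    Tendsto du atBot (nhds 0) ∧ Tendsto du atTop (nhds 0) :=
  derivative_tends_to_zero_at_both_ends_general V hV c hc u du hu hdu eminus eplus huBot huTop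
end

section
/- Let V : ℝ^d → ℝ be C², let e be a critical point of V whose Hessian D²V(e) is invertible with at least one negative eigenvalue, and let u : ℝ → ℝ^d be a solution of ü = ∇V(u) with (u(ξ), u̇(ξ)) → (e, 0) as ξ → +∞. If π denotes the orthogonal projection onto the negative eigenspace of D²V(e), then it cannot hold that u(ξ) - e = π(u(ξ)-e) + o(|π(u(ξ)-e)|) as ξ → +∞ with π(u(ξ)-e) ≠ 0 along a sequence. In other words, the convergence cannot occur dominantly along the negative eigenspace of the Hessian. -/
/-!
The Hamiltonian `‖u̇‖² / 2 - V u` is conserved, and its limit along the orbit is `-V e`; hence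
`V e ≤ V (u ξ)` for every `ξ`. On the other hand the Hessian `H` is uniformly negative definite
on `N`, say `⟪H p, p⟫ ≤ -c ‖p‖²`, so when `u - e = p + o(p)` with `p` the projection onto `N`,
the quadratic form `⟪H h, h⟫ + (c / 2) ‖h‖²` is negative at `h = u ξ - e` for large `ξ` with
`p ≠ 0`. A mean value argument on the segment from `e` to `u ξ`, using `∇V e = 0`, turns this
into `V (u ξ) < V e`.
-/

open Filter Asymptotics Topology

open scoped RealInnerProductSpace

section

variable {E : Type*} [NormedAddCommGroup E] [InnerProductSpace ℝ E]

theorem ContDiff.contDiff_gradient [CompleteSpace E] {V : E → ℝ} {n : WithTop ℕ∞}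
    (hV : ContDiff ℝ (n + 1) V) : ContDiff ℝ n (gradient V) :=
  (InnerProductSpace.toDual ℝ E).symm.contDiff.comp (hV.fderiv_right le_rfl)

theorem HasDerivAt.comp_inner_gradient [CompleteSpace E] {V : E → ℝ} {γ : ℝ → E} {γ' : E}
    {t : ℝ} (hV : DifferentiableAt ℝ V (γ t)) (hγ : HasDerivAt γ γ' t) :
    HasDerivAt (fun s => V (γ s)) ⟪gradient V (γ t), γ'⟫ t := by
  rw [inner_gradient_left]
  exact hV.hasFDerivAt.comp_hasDerivAt t hγ

theorem abs_inner_map_self_sub_le (H : E →L[ℝ] E) (x y : E) :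
    |⟪H x, x⟫ - ⟪H y, y⟫| ≤ ‖H‖ * ‖x - y‖ * (‖x‖ + ‖y‖) := by
  have hsplit : ⟪H x, x⟫ - ⟪H y, y⟫ = ⟪H (x - y), x⟫ + ⟪H y, x - y⟫ := by
    simp only [map_sub, inner_sub_left, inner_sub_right]
    ring
  calc |⟪H x, x⟫ - ⟪H y, y⟫|
      ≤ |⟪H (x - y), x⟫| + |⟪H y, x - y⟫| := hsplit ▸ abs_add_le _ _
    _ ≤ ‖H (x - y)‖ * ‖x‖ + ‖H y‖ * ‖x - y‖ :=
        add_le_add (abs_real_inner_le_norm _ _) (abs_real_inner_le_norm _ _)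
    _ ≤ ‖H‖ * ‖x - y‖ * ‖x‖ + ‖H‖ * ‖y‖ * ‖x - y‖ := by
        gcongr <;> exact H.le_opNorm _
    _ = ‖H‖ * ‖x - y‖ * (‖x‖ + ‖y‖) := by ring

theorem isLittleO_inner_map_self_sub {α : Type*} {l : Filter α} (H : E →L[ℝ] E) {x y : α → E}
    (hxy : (fun a => x a - y a) =o[l] y) :
    (fun a => ⟪H (x a), x a⟫ - ⟪H (y a), y a⟫) =o[l] fun a => ‖y a‖ ^ 2 := by
  have hx : x =O[l] y := by simpa using hxy.isBigO.add (isBigO_refl y l)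
  have hsum : (fun a => ‖x a‖ + ‖y a‖) =O[l] y := hx.norm_left.add (isBigO_refl y l).norm_left
  have hbound : (fun a => ⟪H (x a), x a⟫ - ⟪H (y a), y a⟫) =O[l]
      fun a => ‖x a - y a‖ * (‖x a‖ + ‖y a‖) :=
    .of_bound ‖H‖ <| .of_forall fun a => by
      simpa [mul_assoc, abs_mul, abs_of_nonneg (add_nonneg (norm_nonneg _) (norm_nonneg _))]
        using abs_inner_map_self_sub_le H (x a) (y a)
  refine hbound.trans_isLittleO ?_
  simpa [sq] using (hxy.norm_norm.mul_isBigO hsum.norm_right).norm_right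

theorem exists_mem_Ioo_sub_eq_inner_gradient [CompleteSpace E] {V : E → ℝ}
    (hV : Differentiable ℝ V) (x h : E) :
    ∃ t ∈ Set.Ioo (0 : ℝ) 1, V (x + h) - V x = ⟪gradient V (x + t • h), h⟫ := by
  have hline (t : ℝ) : HasDerivAt (fun t : ℝ => x + t • h) h t := by
    simpa using ((hasDerivAt_id t).smul_const h).const_add x
  have hderiv (t : ℝ) := (hline t).comp_inner_gradient (hV _)
  obtain ⟨t, ht, hslope⟩ := exists_hasDerivAt_eq_slope _ _ one_pos
    (fun t _ => (hderiv t).continuousAt.continuousWithinAt) (fun t _ => hderiv t)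
  exact ⟨t, ht, by simpa using hslope.symm⟩

theorem half_norm_sq_sub_eq_neg_of_tendsto [CompleteSpace E] {V : E → ℝ}
    (hV : Differentiable ℝ V) {u du : ℝ → E} {e : E}
    (hu : ∀ ξ, HasDerivAt u (du ξ) ξ) (hdu : ∀ ξ, HasDerivAt du (gradient V (u ξ)) ξ)
    (hlimu : Tendsto u atTop (𝓝 e)) (hlimdu : Tendsto du atTop (𝓝 0)) (ξ : ℝ) :
    ‖du ξ‖ ^ 2 / 2 - V (u ξ) = -V e := by
  set energy : ℝ → ℝ := fun ξ => ‖du ξ‖ ^ 2 / 2 - V (u ξ)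
  have hderiv (ξ : ℝ) : HasDerivAt energy 0 ξ := by
    refine (((hdu ξ).norm_sq.div_const 2).sub ((hu ξ).comp_inner_gradient (hV _))).congr_deriv ?_
    rw [real_inner_comm]
    ring
  have hconst (ξ : ℝ) : energy ξ = energy 0 :=
    is_const_of_deriv_eq_zero (fun ξ => (hderiv ξ).differentiableAt) (fun ξ => (hderiv ξ).deriv) ξ 0
  have hlim : Tendsto energy atTop (𝓝 (-V e)) := by
    simpa using ((hlimdu.norm.pow 2).div_const 2).sub ((hV.continuous.tendsto e).comp hlimu)
  change energy ξ = _
  rw [hconst]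
  exact tendsto_const_nhds_iff.1 (hlim.congr hconst)

theorem Submodule.exists_pos_inner_map_le_neg_mul_norm_sq (N : Submodule ℝ E)
    [FiniteDimensional ℝ N] {H : E →L[ℝ] E} (hneg : ∀ x ∈ N, x ≠ 0 → ⟪H x, x⟫ < 0) :
    ∃ c > 0, ∀ x ∈ N, ⟪H x, x⟫ ≤ -c * ‖x‖ ^ 2 := by
  obtain ⟨c, hc, hsphere⟩ : ∃ c > 0, ∀ y ∈ Metric.sphere (0 : N) 1, ⟪H y, y⟫ ≤ -c := by
    rcases (Metric.sphere (0 : N) 1).eq_empty_or_nonempty with hempty | hne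
    · exact ⟨1, one_pos, by simp [hempty]⟩
    · obtain ⟨y₀, hy₀, hmax⟩ := (isCompact_sphere (0 : N) 1).exists_isMaxOn hne
        (by fun_prop : Continuous fun y : N => ⟪H y, y⟫).continuousOn
      refine ⟨-⟪H y₀, y₀⟫, neg_pos.2 (hneg _ y₀.2 ?_), fun y hy => by simpa using hmax hy⟩
      simpa using Metric.ne_of_mem_sphere hy₀ one_ne_zero
  refine ⟨c, hc, fun x hx => ?_⟩
  rcases eq_or_ne x 0 with rfl | hx0
  · simp
  have hnorm : 0 < ‖x‖ := norm_pos_iff.2 hx0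
  have hscaled := hsphere (‖x‖⁻¹ • ⟨x, hx⟩) (by simp [norm_smul, hnorm.ne'])
  simp only [Submodule.coe_smul, map_smul, real_inner_smul_left, real_inner_smul_right] at hscaled
  calc ⟪H x, x⟫ = ‖x‖ ^ 2 * (‖x‖⁻¹ * (‖x‖⁻¹ * ⟪H x, x⟫)) := by field_simp
    _ ≤ ‖x‖ ^ 2 * -c := by gcongr
    _ = -c * ‖x‖ ^ 2 := by ring

theorem eventually_lt_of_inner_map_add_mul_norm_sq_neg [CompleteSpace E] {V : E → ℝ} {e : E}
    {H : E →L[ℝ] E} (hV : Differentiable ℝ V) (he : gradient V e = 0)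
    (hH : HasFDerivAt (gradient V) H e) {ε : ℝ} (hε : 0 < ε) :
    ∀ᶠ h in 𝓝 0, ⟪H h, h⟫ + ε * ‖h‖ ^ 2 < 0 → V (e + h) < V e := by
  have hlin : ∀ᶠ h in 𝓝 (0 : E), ‖gradient V (e + h) - H h‖ ≤ ε * ‖h‖ := by
    simpa [he] using (hasFDerivAt_iff_isLittleO_nhds_zero.1 hH).def hε
  obtain ⟨δ, hδ, hball⟩ := Metric.eventually_nhds_iff_ball.1 hlin
  filter_upwards [Metric.ball_mem_nhds 0 hδ] with h hh hneg
  obtain ⟨t, ⟨ht0, ht1⟩, hmvt⟩ := exists_mem_Ioo_sub_eq_inner_gradient hV e h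
  have hth : t • h ∈ Metric.ball (0 : E) δ := by
    rw [mem_ball_zero_iff] at hh ⊢
    rw [norm_smul, Real.norm_of_nonneg ht0.le]
    nlinarith [norm_nonneg h]
  set r := gradient V (e + t • h) - H (t • h)
  have hr : ‖r‖ ≤ ε * ‖t • h‖ := hball _ hth
  have hslope : V (e + h) - V e ≤ t * (⟪H h, h⟫ + ε * ‖h‖ ^ 2) :=
    calc V (e + h) - V e = t * ⟪H h, h⟫ + ⟪r, h⟫ := by
          simp only [hmvt, r, inner_sub_left, map_smul, real_inner_smul_left]; ring
      _ ≤ t * ⟪H h, h⟫ + ‖r‖ * ‖h‖ := by gcongr; exact real_inner_le_norm r h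
      _ ≤ t * ⟪H h, h⟫ + ε * ‖t • h‖ * ‖h‖ := by gcongr
      _ = t * (⟪H h, h⟫ + ε * ‖h‖ ^ 2) := by
          rw [norm_smul, Real.norm_of_nonneg ht0.le]; ring
  linarith [mul_neg_of_pos_of_neg ht0 hneg]

end

theorem no_approach_along_negative_eigenspace_general {d : ℕ}
    (V : EuclideanSpace ℝ (Fin d) → ℝ) (hV : ContDiff ℝ 2 V)
    (e : EuclideanSpace ℝ (Fin d)) (he : gradient V e = 0)
    (N : Submodule ℝ (EuclideanSpace ℝ (Fin d)))
    (hNneg : ∀ x ∈ N, x ≠ 0 → ⟪fderiv ℝ (gradient V) e x, x⟫ < 0)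
    (u du : ℝ → EuclideanSpace ℝ (Fin d))
    (hu : ∀ ξ, HasDerivAt u (du ξ) ξ)
    (hdu : ∀ ξ, HasDerivAt du (gradient V (u ξ)) ξ)
    (hlimu : Tendsto u atTop (nhds e)) (hlimdu : Tendsto du atTop (nhds 0))
    (hdom : (fun ξ : ℝ => (u ξ - e) - (Submodule.orthogonalProjection N (u ξ - e) :
        EuclideanSpace ℝ (Fin d))) =o[atTop]
      fun ξ : ℝ => (Submodule.orthogonalProjection N (u ξ - e) : EuclideanSpace ℝ (Fin d)))
    (hfreq : ∃ᶠ ξ in atTop,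
      (Submodule.orthogonalProjection N (u ξ - e) : EuclideanSpace ℝ (Fin d)) ≠ 0) :
    False := by
  set H := fderiv ℝ (gradient V) e
  have hVd : Differentiable ℝ V := hV.differentiable two_ne_zero
  have hH : HasFDerivAt (gradient V) H e :=
    ((hV.contDiff_gradient (n := 1)).differentiable one_ne_zero e).hasFDerivAt
  obtain ⟨c, hc, hNc⟩ := N.exists_pos_inner_map_le_neg_mul_norm_sq hNneg
  set H' := H + (c / 2) • ContinuousLinearMap.id ℝ (EuclideanSpace ℝ (Fin d))
  have hH' (x : EuclideanSpace ℝ (Fin d)) : ⟪H' x, x⟫ = ⟪H x, x⟫ + c / 2 * ‖x‖ ^ 2 := by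
    simp [H', inner_add_left, real_inner_smul_left]
  have hclose := (isLittleO_inner_map_self_sub H' hdom).def (by positivity : 0 < c / 4)
  have hsign := (tendsto_sub_nhds_zero_iff.2 hlimu).eventually
    (eventually_lt_of_inner_map_add_mul_norm_sq_neg hVd he hH (half_pos hc))
  obtain ⟨ξ, hp, hcloseξ, hsignξ⟩ := (hfreq.and_eventually (hclose.and hsign)).exists
  set p : EuclideanSpace ℝ (Fin d) := ↑(N.orthogonalProjectionOnto (u ξ - e))
  have hbelow : V (u ξ) < V e := by
    refine (add_sub_cancel e (u ξ)) ▸ hsignξ ?_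
    have hpN : ⟪H p, p⟫ ≤ -c * ‖p‖ ^ 2 := hNc p (Submodule.coe_mem _)
    have hpos : 0 < c * ‖p‖ ^ 2 := mul_pos hc (pow_pos (norm_pos_iff.2 hp) 2)
    have hnear : ⟪H' (u ξ - e), u ξ - e⟫ - ⟪H' p, p⟫ ≤ c / 4 * ‖p‖ ^ 2 :=
      (le_abs_self _).trans (by simpa using hcloseξ)
    rw [← hH']
    linarith [hH' p]
  have henergy := half_norm_sq_sub_eq_neg_of_tendsto hVd hu hdu hlimu hlimdu ξ
  linarith [sq_nonneg ‖du ξ‖]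

theorem no_approach_along_negative_eigenspace {d : ℕ}
    (V : EuclideanSpace ℝ (Fin d) → ℝ) (hV : ContDiff ℝ 2 V)
    (e : EuclideanSpace ℝ (Fin d)) (he : gradient V e = 0)
    (N : Submodule ℝ (EuclideanSpace ℝ (Fin d))) (hNbot : N ≠ ⊥)
    (hNinv : ∀ x ∈ N, fderiv ℝ (gradient V) e x ∈ N)
    (hNneg : ∀ x ∈ N, x ≠ 0 → ⟪fderiv ℝ (gradient V) e x, x⟫ < 0)
    (hPpos : ∀ x ∈ Nᗮ, x ≠ 0 → 0 < ⟪fderiv ℝ (gradient V) e x, x⟫)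
    (u du : ℝ → EuclideanSpace ℝ (Fin d))
    (hu : ∀ ξ, HasDerivAt u (du ξ) ξ)
    (hdu : ∀ ξ, HasDerivAt du (gradient V (u ξ)) ξ)
    (hlimu : Tendsto u atTop (nhds e)) (hlimdu : Tendsto du atTop (nhds 0))
    (hdom : (fun ξ : ℝ => (u ξ - e) - (Submodule.orthogonalProjection N (u ξ - e) :
        EuclideanSpace ℝ (Fin d))) =o[atTop]
      fun ξ : ℝ => (Submodule.orthogonalProjection N (u ξ - e) : EuclideanSpace ℝ (Fin d)))
    (hfreq : ∃ᶠ ξ in atTop,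
      (Submodule.orthogonalProjection N (u ξ - e) : EuclideanSpace ℝ (Fin d)) ≠ 0) :
    False :=
  no_approach_along_negative_eigenspace_general V hV e he N hNneg u du hu hdu hlimu hlimdu hdom
    hfreq
end
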